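/- arXiv:2412.05522 — 3 statements merged into one kernel-verified Lean document; each statement's English description precedes it below -/
import Mathlib

section
/- Let c be a cost vector of nonnegative reals, let t ≥ 1 be an integer, and let G be a simple graph. Let V₀ and V₁ be sets of pairwise clones in G such that V₀ ∪ V₁ is an independent set of G and V₀, V₁ are disjoint. Then π*_t(G, c) ≤ max{ π*_t(G(V₀→V₁), c), π*_t(G(V₁→V₀), c) }. -/
open scoped Classical
open Finset

/-- `K` is a clique of `G`: a nonempty set of pairwise adjacent vertices. -/
def IsCliqueOf {V : Type} [Fintype V] [DecidableEq V] (G : SimpleGraph V) (K : Finset V) : Prop :=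
  K.Nonempty ∧ G.IsClique (K : Set V)

/-- Total `c`-cost of a weighting `f` of the finsets of vertices. -/
noncomputable def cliqueCost {V : Type} [Fintype V] [DecidableEq V]
    (c : ℕ → ℝ) (f : Finset V → ℝ) : ℝ :=
  ∑ K : Finset V, c K.card * f K

/-- `f` is a fractional `t`-clique cover of `G`. -/
def IsFracCover {V : Type} [Fintype V] [DecidableEq V]
    (t : ℕ) (G : SimpleGraph V) (f : Finset V → ℝ) : Prop :=
  (∀ K, 0 ≤ f K) ∧ (∀ K, ¬ IsCliqueOf G K → f K = 0) ∧
  ∀ T : Finset V, T.card = t → G.IsClique (T : Set V) →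
    1 ≤ ∑ K ∈ Finset.univ.filter (fun K => T ⊆ K), f K

/-- `f` is a fractional `t`-clique decomposition of `G`. -/
def IsFracDecomp {V : Type} [Fintype V] [DecidableEq V]
    (t : ℕ) (G : SimpleGraph V) (f : Finset V → ℝ) : Prop :=
  (∀ K, 0 ≤ f K) ∧ (∀ K, ¬ IsCliqueOf G K → f K = 0) ∧
  ∀ T : Finset V, T.card = t → G.IsClique (T : Set V) →
    ∑ K ∈ Finset.univ.filter (fun K => T ⊆ K), f K = 1

/-- `f` is an integer (`{0,1}`-valued) `t`-clique cover of `G`. -/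
def IsIntCover {V : Type} [Fintype V] [DecidableEq V]
    (t : ℕ) (G : SimpleGraph V) (f : Finset V → ℝ) : Prop :=
  IsFracCover t G f ∧ ∀ K, f K = 0 ∨ f K = 1

/-- `f` is an integer (`{0,1}`-valued) `t`-clique decomposition of `G`. -/
def IsIntDecomp {V : Type} [Fintype V] [DecidableEq V]
    (t : ℕ) (G : SimpleGraph V) (f : Finset V → ℝ) : Prop :=
  IsFracDecomp t G f ∧ ∀ K, f K = 0 ∨ f K = 1

/-- θ*_t(G,c): minimum total c-cost of a fractional t-clique cover. -/
noncomputable def thetaFrac {V : Type} [Fintype V] [DecidableEq V]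
    (t : ℕ) (G : SimpleGraph V) (c : ℕ → ℝ) : ℝ :=
  sInf { x | ∃ f, IsFracCover t G f ∧ x = cliqueCost c f }

/-- θ_t(G,c): minimum total c-cost of an integer t-clique cover. -/
noncomputable def thetaInt {V : Type} [Fintype V] [DecidableEq V]
    (t : ℕ) (G : SimpleGraph V) (c : ℕ → ℝ) : ℝ :=
  sInf { x | ∃ f, IsIntCover t G f ∧ x = cliqueCost c f }

/-- π*_t(G,c): minimum total c-cost of a fractional t-clique decomposition. -/
noncomputable def piFrac {V : Type} [Fintype V] [DecidableEq V]
    (t : ℕ) (G : SimpleGraph V) (c : ℕ → ℝ) : ℝ :=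
  sInf { x | ∃ f, IsFracDecomp t G f ∧ x = cliqueCost c f }

/-- π_t(G,c): minimum total c-cost of an integer t-clique decomposition. -/
noncomputable def piInt {V : Type} [Fintype V] [DecidableEq V]
    (t : ℕ) (G : SimpleGraph V) (c : ℕ → ℝ) : ℝ :=
  sInf { x | ∃ f, IsIntDecomp t G f ∧ x = cliqueCost c f }

/-- `G` is complete multipartite: vertices can be assigned to parts so that
adjacency holds exactly between distinct parts. -/
def IsCompleteMultipartite {V : Type} [Fintype V] [DecidableEq V]
    (G : SimpleGraph V) : Prop :=
  ∃ p : V → ℕ, ∀ u v, G.Adj u v ↔ p u ≠ p v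

/-- `U` is a (nonempty) set of pairwise clones: all vertices of `U` have the
same neighborhood in `G`. -/
def IsCloneSet {V : Type} [Fintype V] [DecidableEq V] (G : SimpleGraph V) (U : Set V) : Prop :=
  U.Nonempty ∧ ∀ u ∈ U, ∀ v ∈ U, G.neighborSet u = G.neighborSet v

/-- `G(V₀ → V₁)`: symmetrize `V₀` to `V₁`.  Edges inside the complement of
`V₀ ∪ V₁` are kept, and every vertex of `V₀ ∪ V₁` is joined exactly to the
common neighborhood of the vertices of `V₁`. -/
def symmetrize {V : Type} [Fintype V] [DecidableEq V]
    (G : SimpleGraph V) (V₀ V₁ : Set V) : SimpleGraph V where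
  Adj x y :=
    (x ∉ V₀ ∪ V₁ ∧ y ∉ V₀ ∪ V₁ ∧ G.Adj x y) ∨
    (x ∈ V₀ ∪ V₁ ∧ y ∉ V₀ ∪ V₁ ∧ ∃ z ∈ V₁, G.Adj z y) ∨
    (y ∈ V₀ ∪ V₁ ∧ x ∉ V₀ ∪ V₁ ∧ ∃ z ∈ V₁, G.Adj z x)
  symm := by
    constructor
    rintro x y (⟨hx, hy, h⟩ | ⟨hx, hy, h⟩ | ⟨hy, hx, h⟩)
    · exact Or.inl ⟨hy, hx, h.symm⟩
    · exact Or.inr (Or.inr ⟨hx, hy, h⟩)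
    · exact Or.inr (Or.inl ⟨hy, hx, h⟩)
  loopless := by
    constructor
    rintro x (⟨hx, hy, h⟩ | ⟨hx, hy, h⟩ | ⟨hy, hx, h⟩)
    · exact G.irrefl h
    · exact hy hx
    · exact hx hy

/-!
Write `U = V₀ ∪ V₁`. In `G(V₀ → V₁)` all vertices of `U` are clones, so a decomposition `g` of
it can be averaged over `U`: keep `g` on the cliques avoiding `U`, and give each clique
`insert v C` with `v ∈ V₁` and `C` avoiding `U` the weight `|V₁|⁻¹ ∑_{u ∈ U} g (insert u C)`.
This is a weighting of the cliques of `G` of the same cost, and since a clique of `G` meets the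
independent set `U` at most once, it covers a `t`-clique `T` of `G` once if `T` avoids `U`,
`|U| / |V₁|` times if `T` meets `V₁`, and not at all if `T` meets `V₀`. Combining it with the
weighting obtained in the same way from a decomposition of `G(V₁ → V₀)`, with the convex weights
`|V₁| / |U|` and `|V₀| / |U|`, covers every `t`-clique of `G` exactly once, at a cost at most the
larger of the two costs.
-/

namespace Finset

variable {α : Type*}

lemma eq_empty_or_eq_singleton_of_card_le_one {s : Finset α} (h : #s ≤ 1) :
    s = ∅ ∨ ∃ a, s = {a} := by
  rcases Nat.le_one_iff_eq_zero_or_eq_one.mp h with h | h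
  exacts [Or.inl (card_eq_zero.mp h), Or.inr (card_eq_one.mp h)]

variable [DecidableEq α] {U : Finset α}

lemma div_card_union_add_div_card_union {A B : Finset α} (hAB : Disjoint A B)
    (hA : A.Nonempty) : (#B : ℝ) / #(A ∪ B) + #A / #(A ∪ B) = 1 := by
  have : (#A : ℝ) + #B ≠ 0 := by have := hA.card_pos; positivity
  rw [← add_div, card_union_of_disjoint hAB, Nat.cast_add, add_comm, div_self this]

lemma insert_inter_eq_singleton {C : Finset α} {u : α} (hC : Disjoint C U) (hu : u ∈ U) :
    insert u C ∩ U = {u} := by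
  rw [insert_inter_of_mem hu, disjoint_iff_inter_eq_empty.mp hC, insert_empty]

lemma insert_sdiff_eq_self {C : Finset α} {u : α} (hC : Disjoint C U) (hu : u ∈ U) :
    insert u C \ U = C := by
  rw [insert_sdiff_of_mem _ hu, sdiff_eq_self_of_disjoint hC]

lemma insert_sdiff_of_inter_eq_singleton {K : Finset α} {v : α} (hK : K ∩ U = {v}) :
    insert v (K \ U) = K := by
  rw [← union_singleton, ← hK, sdiff_union_inter]

end Finset

section SplitByIntersection

variable {V : Type} [Fintype V] [DecidableEq V] {U : Finset V} {g : Finset V → ℝ}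

lemma sum_insert_of_disjoint {S : Finset V} (hS : Disjoint S U) {u : V} (hu : u ∈ U) :
    ∑ C ∈ univ.filter (fun C => S ⊆ C ∧ Disjoint C U), g (insert u C) =
      ∑ K ∈ univ.filter (fun K => S ⊆ K ∧ K ∩ U = {u}), g K := by
  refine sum_nbij' (insert u) (· \ U) ?_ ?_ ?_ ?_ (fun _ _ => rfl) <;> simp only [mem_filter_univ]
  · rintro C ⟨hSC, hC⟩
    exact ⟨hSC.trans (subset_insert u C), insert_inter_eq_singleton hC hu⟩
  · rintro K ⟨hSK, -⟩
    exact ⟨subset_sdiff.mpr ⟨hSK, hS⟩, sdiff_disjoint⟩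
  · rintro C ⟨-, hC⟩
    exact insert_sdiff_eq_self hC hu
  · rintro K ⟨-, hK⟩
    exact insert_sdiff_of_inter_eq_singleton hK

variable (hg : ∀ K, 1 < #(K ∩ U) → g K = 0)
include hg

lemma sum_superset_eq_of_disjoint {T : Finset V} (hT : Disjoint T U) :
    ∑ K ∈ univ.filter (fun K => T ⊆ K), g K =
      ∑ C ∈ univ.filter (fun C => T ⊆ C ∧ Disjoint C U), g C +
        ∑ u ∈ U, ∑ C ∈ univ.filter (fun C => T ⊆ C ∧ Disjoint C U), g (insert u C) := by
  have hsplit (K : Finset V) :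
      g K = (if Disjoint K U then g K else 0) + ∑ u ∈ U, if K ∩ U = {u} then g K else 0 := by
    rcases le_or_gt #(K ∩ U) 1 with h | h
    · rcases eq_empty_or_eq_singleton_of_card_le_one h with h | ⟨v, h⟩
      · simp [disjoint_iff_inter_eq_empty, h]
      · have hv : v ∈ U := mem_of_mem_inter_right (h ▸ mem_singleton_self v)
        simp [disjoint_iff_inter_eq_empty, h, hv]
    · simp [hg K h]
  rw [sum_congr rfl fun K _ => hsplit K, sum_add_distrib, sum_comm, ← sum_filter, filter_filter]
  simp_rw [← sum_filter, filter_filter]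
  rw [sum_congr rfl fun u hu => sum_insert_of_disjoint hT hu]

lemma sum_superset_eq_of_inter_eq_singleton {T : Finset V} {v : V} (hT : T ∩ U = {v}) :
    ∑ K ∈ univ.filter (fun K => T ⊆ K), g K =
      ∑ C ∈ univ.filter (fun C => T \ U ⊆ C ∧ Disjoint C U), g (insert v C) := by
  have hvT : v ∈ T ∧ v ∈ U := mem_inter.mp (hT ▸ mem_singleton_self v)
  rw [sum_insert_of_disjoint sdiff_disjoint hvT.2]
  refine (sum_subset (fun K => ?_) (fun K hK hK' => hg K ?_)).symm
  · simp only [mem_filter_univ]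
    rintro ⟨hK, hKU⟩
    rw [← insert_sdiff_of_inter_eq_singleton hT]
    exact insert_subset (mem_of_mem_inter_left (hKU ▸ mem_singleton_self v)) hK
  · simp only [mem_filter_univ, not_and] at hK hK'
    have hvK : v ∈ K ∩ U := mem_inter.mpr ⟨hK hvT.1, hvT.2⟩
    by_contra! h
    rcases eq_empty_or_eq_singleton_of_card_le_one h with h | ⟨w, h⟩
    · simp [h] at hvK
    · rw [h, mem_singleton] at hvK
      exact hK' (sdiff_subset.trans hK) (hvK ▸ h)

end SplitByIntersection

section Transfer

variable {V : Type} [DecidableEq V] (U B : Finset V)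

noncomputable def transfer (g : Finset V → ℝ) (K : Finset V) : ℝ :=
  if Disjoint K U then g K
  else if ∃ v ∈ B, K ∩ U = {v} then (#B : ℝ)⁻¹ * ∑ u ∈ U, g (insert u (K \ U))
  else 0

variable {U B} {g : Finset V → ℝ}

lemma transfer_of_disjoint {K : Finset V} (hK : Disjoint K U) : transfer U B g K = g K :=
  if_pos hK

lemma transfer_insert {C : Finset V} {v : V} (hC : Disjoint C U) (hv : v ∈ U) :
    transfer U B g (insert v C) =
      if v ∈ B then (#B : ℝ)⁻¹ * ∑ u ∈ U, g (insert u C) else 0 := by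
  have hvC : ¬ Disjoint (insert v C) U := not_disjoint_iff.mpr ⟨v, mem_insert_self v C, hv⟩
  simp [transfer, hvC, insert_inter_eq_singleton hC hv, insert_sdiff_eq_self hC hv]

lemma transfer_eq_zero_of_one_lt_card {K : Finset V} (hK : 1 < #(K ∩ U)) :
    transfer U B g K = 0 := by
  have hdisj : ¬ Disjoint K U := by
    rw [disjoint_iff_inter_eq_empty]
    rintro h
    simp [h] at hK
  have hsingle : ¬ ∃ v ∈ B, K ∩ U = {v} := by
    rintro ⟨v, -, h⟩
    simp [h] at hK
  rw [transfer, if_neg hdisj, if_neg hsingle]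

lemma transfer_nonneg (hg : ∀ K, 0 ≤ g K) (K : Finset V) : 0 ≤ transfer U B g K := by
  unfold transfer
  split_ifs
  exacts [hg K, mul_nonneg (by positivity) (sum_nonneg fun u _ => hg _), le_rfl]

variable [Fintype V] (hg : ∀ K, 1 < #(K ∩ U) → g K = 0)
include hg

/-- Weights `w #K` give both the cost (`w = c`, `T = ∅`) and the coverage (`w = 1`). -/
lemma sum_mul_transfer_of_disjoint (w : ℕ → ℝ) (hB : B.Nonempty) (hBU : B ⊆ U)
    {T : Finset V} (hT : Disjoint T U) :
    ∑ K ∈ univ.filter (fun K => T ⊆ K), w #K * transfer U B g K =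
      ∑ K ∈ univ.filter (fun K => T ⊆ K), w #K * g K := by
  set S := univ.filter (fun C => T ⊆ C ∧ Disjoint C U)
  have hS {C} (hC : C ∈ S) : Disjoint C U := (mem_filter_univ C).mp hC |>.2
  have hcard {C u} (hC : C ∈ S) (hu : u ∈ U) : #(insert u C) = #C + 1 :=
    card_insert_of_notMem fun huC => disjoint_left.mp (hS hC) huC hu
  rw [sum_superset_eq_of_disjoint
      (fun K hK => by rw [transfer_eq_zero_of_one_lt_card hK, mul_zero]) hT,
    sum_superset_eq_of_disjoint (fun K hK => by rw [hg K hK, mul_zero]) hT]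
  congr 1
  · exact sum_congr rfl fun C hC => by rw [transfer_of_disjoint (hS hC)]
  calc ∑ v ∈ U, ∑ C ∈ S, w #(insert v C) * transfer U B g (insert v C)
      = ∑ v ∈ U, if v ∈ B then
          ∑ C ∈ S, w (#C + 1) * ((#B : ℝ)⁻¹ * ∑ u ∈ U, g (insert u C)) else 0 := by
        refine sum_congr rfl fun v hv => ?_
        split_ifs with hvB
        · exact sum_congr rfl fun C hC => by
            rw [transfer_insert (hS hC) hv, if_pos hvB, hcard hC hv]
        · exact sum_eq_zero fun C hC => by rw [transfer_insert (hS hC) hv, if_neg hvB, mul_zero]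
    _ = ∑ C ∈ S, w (#C + 1) * ∑ u ∈ U, g (insert u C) := by
        rw [sum_ite_mem, inter_eq_right.mpr hBU, sum_const, nsmul_eq_mul, mul_sum]
        refine sum_congr rfl fun C _ => ?_
        have : (#B : ℝ) ≠ 0 := by exact_mod_cast hB.card_pos.ne'
        field_simp
    _ = ∑ u ∈ U, ∑ C ∈ S, w #(insert u C) * g (insert u C) := by
        rw [sum_comm]
        exact sum_congr rfl fun C hC => by
          rw [mul_sum]; exact sum_congr rfl fun u hu => by rw [hcard hC hu]

lemma cliqueCost_transfer (c : ℕ → ℝ) (hB : B.Nonempty) (hBU : B ⊆ U) :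
    cliqueCost c (transfer U B g) = cliqueCost c g := by
  simpa [cliqueCost] using sum_mul_transfer_of_disjoint hg c hB hBU (disjoint_empty_left U)

lemma sum_transfer_of_inter_eq_singleton {T : Finset V} {v : V} (hT : T ∩ U = {v}) :
    ∑ K ∈ univ.filter (fun K => T ⊆ K), transfer U B g K =
      if v ∈ B then
        (#B : ℝ)⁻¹ * ∑ u ∈ U, ∑ K ∈ univ.filter (fun K => insert u (T \ U) ⊆ K), g K
      else 0 := by
  have hv : v ∈ U := mem_of_mem_inter_right (hT ▸ mem_singleton_self v)
  rw [sum_superset_eq_of_inter_eq_singleton (fun K => transfer_eq_zero_of_one_lt_card) hT,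
    sum_congr rfl fun C hC => transfer_insert ((mem_filter_univ C).mp hC).2 hv]
  split_ifs with hvB
  · rw [← mul_sum, sum_comm]
    congr 1
    refine sum_congr rfl fun u hu => ?_
    rw [sum_superset_eq_of_inter_eq_singleton hg (insert_inter_eq_singleton sdiff_disjoint hu),
      insert_sdiff_eq_self sdiff_disjoint hu]
  · exact sum_eq_zero fun _ _ => rfl

end Transfer

section Symmetrize

variable {V : Type} [Fintype V] [DecidableEq V] {G : SimpleGraph V}

lemma symmetrize_adj_iff_of_notMem {A B : Set V} {x y : V} (hx : x ∉ A ∪ B)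
    (hy : y ∉ A ∪ B) : (symmetrize G A B).Adj x y ↔ G.Adj x y := by
  simp only [symmetrize, hx, hy, false_and, or_false, not_false_eq_true, true_and]

lemma isIndepSet_symmetrize (A B : Set V) : (symmetrize G A B).IsIndepSet (A ∪ B) := by
  rintro x hx y hy - (⟨hx', -⟩ | ⟨-, hy', -⟩ | ⟨-, hx', -⟩)
  exacts [hx' hx, hy' hy, hx' hx]

lemma IsCloneSet.symmetrize_adj_iff {A B : Set V} (hB : IsCloneSet G B) {u v y : V}
    (hu : u ∈ A ∪ B) (hv : v ∈ B) :
    (symmetrize G A B).Adj u y ↔ y ∉ A ∪ B ∧ G.Adj v y := by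
  have hclone {z} (hz : z ∈ B) : G.Adj z y ↔ G.Adj v y := by
    rw [← SimpleGraph.mem_neighborSet, hB.2 z hz v hv, SimpleGraph.mem_neighborSet]
  simp only [symmetrize, hu, not_true_eq_false, false_and, true_and, and_false, or_false, false_or]
  exact ⟨fun ⟨hy, z, hz, h⟩ => ⟨hy, (hclone hz).mp h⟩,
    fun ⟨hy, h⟩ => ⟨hy, v, hv, h⟩⟩

variable {A B C : Finset V}

lemma isClique_symmetrize_iff_of_disjoint (hC : Disjoint C (A ∪ B)) :
    (symmetrize G A B).IsClique (C : Set V) ↔ G.IsClique (C : Set V) := by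
  have hout {x} (hx : x ∈ C) : x ∉ (A ∪ B : Set V) := by
    simpa using disjoint_left.mp hC hx
  exact forall₂_congr fun x hx => forall₂_congr fun y hy =>
    imp_congr_right fun _ => symmetrize_adj_iff_of_notMem (hout hx) (hout hy)

lemma IsCloneSet.isClique_symmetrize_insert_iff (hB : IsCloneSet G B) (hC : Disjoint C (A ∪ B))
    {u v : V} (hu : u ∈ A ∪ B) (hv : v ∈ B) :
    (symmetrize G A B).IsClique ((insert u C : Finset V) : Set V) ↔
      G.IsClique ((insert v C : Finset V) : Set V) := by
  have hout {x} (hx : x ∈ (C : Set V)) : x ∉ (A ∪ B : Set V) := by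
    simpa using disjoint_left.mp hC hx
  have hu' : u ∈ (A ∪ B : Set V) := by simpa using hu
  rw [coe_insert, coe_insert, SimpleGraph.isClique_insert, SimpleGraph.isClique_insert,
    isClique_symmetrize_iff_of_disjoint hC]
  refine and_congr_right fun _ => forall₂_congr fun y hy => ?_
  rw [hB.symmetrize_adj_iff hu' (by simpa using hv), and_iff_right (hout hy)]
  exact ⟨fun h _ => h fun hyu => hout hy (hyu ▸ hu'),
    fun h _ => h fun hyv => hout hy (hyv ▸ Or.inr (by simpa using hv))⟩

end Symmetrize

section Decomposition

variable {V : Type} [DecidableEq V]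

lemma card_inter_le_one_of_isClique {X : SimpleGraph V} {U K : Finset V}
    (hU : X.IsIndepSet (U : Set V)) (hK : X.IsClique (K : Set V)) : #(K ∩ U) ≤ 1 := by
  refine card_le_one.mpr fun a ha b hb => by_contra fun hab => ?_
  rw [mem_inter] at ha hb
  exact hU (mem_coe.mpr ha.2) (mem_coe.mpr hb.2) hab
    (hK (mem_coe.mpr ha.1) (mem_coe.mpr hb.1) hab)

variable [Fintype V] {t : ℕ}

lemma IsFracDecomp.eq_zero_of_one_lt_card_inter {X : SimpleGraph V} {f : Finset V → ℝ}
    (hf : IsFracDecomp t X f) {U : Finset V} (hU : X.IsIndepSet (U : Set V)) {K : Finset V}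
    (hK : 1 < #(K ∩ U)) : f K = 0 :=
  hf.2.1 K fun h => (card_inter_le_one_of_isClique hU h.2).not_gt hK

lemma exists_isFracDecomp (ht : 1 ≤ t) (X : SimpleGraph V) : ∃ f, IsFracDecomp t X f := by
  refine ⟨fun K => if IsCliqueOf X K ∧ #K = t then 1 else 0, fun K => ?_, fun K hK => ?_,
    fun T hT hTX => ?_⟩
  · dsimp only
    split_ifs <;> norm_num
  · exact if_neg fun h => hK h.1
  · rw [sum_eq_single_of_mem T ((mem_filter_univ T).mpr subset_rfl)]
    · exact if_pos ⟨⟨card_pos.mp (by omega), hTX⟩, hT⟩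
    · intro K hK hKT
      refine if_neg fun h => hKT (eq_of_subset_of_card_le ((mem_filter_univ K).mp hK) ?_).symm
      omega

lemma cliqueCost_nonneg {X : SimpleGraph V} {c : ℕ → ℝ} (hc : ∀ i, 1 ≤ i → 0 ≤ c i)
    {f : Finset V → ℝ} (hf : IsFracDecomp t X f) : 0 ≤ cliqueCost c f := by
  refine sum_nonneg fun K _ => ?_
  rcases K.eq_empty_or_nonempty with rfl | hK
  · rw [hf.2.1 ∅ fun h => not_nonempty_empty h.1, mul_zero]
  · exact mul_nonneg (hc _ hK.card_pos) (hf.1 K)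

lemma piFrac_le_cliqueCost {X : SimpleGraph V} {c : ℕ → ℝ} (hc : ∀ i, 1 ≤ i → 0 ≤ c i)
    {f : Finset V → ℝ} (hf : IsFracDecomp t X f) : piFrac t X c ≤ cliqueCost c f :=
  csInf_le ⟨0, by rintro _ ⟨g, hg, rfl⟩; exact cliqueCost_nonneg hc hg⟩ ⟨f, hf, rfl⟩

end Decomposition

section TransferOnSymmetrize

variable {V : Type} [Fintype V] [DecidableEq V] {G : SimpleGraph V} {A B : Finset V} {t : ℕ}
  {g : Finset V → ℝ}

lemma IsFracDecomp.eq_zero_of_one_lt_card_inter_union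
    (hg : IsFracDecomp t (symmetrize G A B) g) {K : Finset V} (hK : 1 < #(K ∩ (A ∪ B))) :
    g K = 0 :=
  hg.eq_zero_of_one_lt_card_inter (by rw [coe_union]; exact isIndepSet_symmetrize _ _) hK

lemma IsFracDecomp.transfer_eq_zero_of_not_isCliqueOf (hB : IsCloneSet G B)
    (hg : IsFracDecomp t (symmetrize G A B) g) {K : Finset V} (hK : ¬ IsCliqueOf G K) :
    transfer (A ∪ B) B g K = 0 := by
  unfold transfer
  split_ifs with hdisj hsingle
  · exact hg.2.1 K fun ⟨hne, hcl⟩ =>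
      hK ⟨hne, (isClique_symmetrize_iff_of_disjoint hdisj).mp hcl⟩
  · obtain ⟨v, hvB, hKv⟩ := hsingle
    refine mul_eq_zero_of_right _ (sum_eq_zero fun u hu => hg.2.1 _ fun ⟨_, hcl⟩ => hK ?_)
    rw [← insert_sdiff_of_inter_eq_singleton hKv]
    exact ⟨insert_nonempty _ _,
      (hB.isClique_symmetrize_insert_iff sdiff_disjoint hu hvB).mp hcl⟩
  · rfl

lemma IsFracDecomp.sum_transfer_of_disjoint (hB : IsCloneSet G B)
    (hg : IsFracDecomp t (symmetrize G A B) g) {T : Finset V} (hT : #T = t)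
    (hTG : G.IsClique (T : Set V)) (hTU : Disjoint T (A ∪ B)) :
    ∑ K ∈ univ.filter (fun K => T ⊆ K), transfer (A ∪ B) B g K = 1 := by
  have h := sum_mul_transfer_of_disjoint (fun K => hg.eq_zero_of_one_lt_card_inter_union)
    (fun _ => 1) (coe_nonempty.mp hB.1) subset_union_right hTU
  simp only [one_mul] at h
  rw [h]
  exact hg.2.2 T hT ((isClique_symmetrize_iff_of_disjoint hTU).mpr hTG)

lemma IsFracDecomp.sum_transfer_of_inter_eq_singleton (hB : IsCloneSet G B)
    (hg : IsFracDecomp t (symmetrize G A B) g) {T : Finset V} (hT : #T = t)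
    (hTG : G.IsClique (T : Set V)) {v : V} (hTv : T ∩ (A ∪ B) = {v}) :
    ∑ K ∈ univ.filter (fun K => T ⊆ K), transfer (A ∪ B) B g K =
      if v ∈ B then (#(A ∪ B) : ℝ) / #B else 0 := by
  rw [_root_.sum_transfer_of_inter_eq_singleton
    (fun K => hg.eq_zero_of_one_lt_card_inter_union) hTv]
  split_ifs with hvB
  · have hcard {u} (hu : u ∈ A ∪ B) : #(insert u (T \ (A ∪ B))) = t := by
      rw [← hT, card_insert_of_notMem fun h => (mem_sdiff.mp h).2 hu,
        ← card_insert_of_notMem fun h => (mem_sdiff.mp h).2 (mem_union_right A hvB),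
        insert_sdiff_of_inter_eq_singleton hTv]
    have hcov {u} (hu : u ∈ A ∪ B) :
        ∑ K ∈ univ.filter (fun K => insert u (T \ (A ∪ B)) ⊆ K), g K = 1 :=
      hg.2.2 _ (hcard hu) ((hB.isClique_symmetrize_insert_iff sdiff_disjoint hu hvB).mpr
        (by rwa [insert_sdiff_of_inter_eq_singleton hTv]))
    rw [sum_congr rfl fun u hu => hcov hu, sum_const, nsmul_one, div_eq_inv_mul]
  · rfl

end TransferOnSymmetrize

section CloneMix

variable {V : Type} [Fintype V] [DecidableEq V] {G : SimpleGraph V} {A B : Finset V} {t : ℕ}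
  {f₁ f₀ : Finset V → ℝ}

noncomputable def cloneMix (A B : Finset V) (f₁ f₀ : Finset V → ℝ) (K : Finset V) : ℝ :=
  #B / #(A ∪ B) * transfer (A ∪ B) B f₁ K + #A / #(A ∪ B) * transfer (A ∪ B) A f₀ K

lemma isFracDecomp_cloneMix (hA : IsCloneSet G A) (hB : IsCloneSet G B) (hAB : Disjoint A B)
    (hind : G.IsIndepSet (A ∪ B : Finset V)) (hf₁ : IsFracDecomp t (symmetrize G A B) f₁)
    (hf₀ : IsFracDecomp t (symmetrize G B A) f₀) :
    IsFracDecomp t G (cloneMix A B f₁ f₀) := by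
  refine ⟨fun K => ?_, fun K hK => ?_, fun T hT hTG => ?_⟩
  · have h₁ := transfer_nonneg (U := A ∪ B) (B := B) hf₁.1 K
    have h₀ := transfer_nonneg (U := A ∪ B) (B := A) hf₀.1 K
    unfold cloneMix
    positivity
  · have h₀ := hf₀.transfer_eq_zero_of_not_isCliqueOf hA hK
    rw [union_comm B A] at h₀
    simp only [cloneMix, hf₁.transfer_eq_zero_of_not_isCliqueOf hB hK, h₀, mul_zero, add_zero]
  simp only [cloneMix, sum_add_distrib, ← mul_sum]
  rcases eq_empty_or_eq_singleton_of_card_le_one (card_inter_le_one_of_isClique hind hTG) with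
    hTU | ⟨v, hTv⟩
  · have hTU := disjoint_iff_inter_eq_empty.mpr hTU
    have h₀ := hf₀.sum_transfer_of_disjoint hA hT hTG (by rwa [union_comm])
    rw [union_comm B A] at h₀
    rw [hf₁.sum_transfer_of_disjoint hB hT hTG hTU, h₀, mul_one, mul_one,
      div_card_union_add_div_card_union hAB (coe_nonempty.mp hA.1)]
  · have h₀ := hf₀.sum_transfer_of_inter_eq_singleton hA hT hTG (v := v) (by rwa [union_comm])
    rw [union_comm B A] at h₀
    rw [hf₁.sum_transfer_of_inter_eq_singleton hB hT hTG hTv, h₀]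
    have hv : v ∈ A ∪ B := mem_of_mem_inter_right (hTv ▸ mem_singleton_self v)
    have hU : (#(A ∪ B) : ℝ) ≠ 0 := Nat.cast_ne_zero.mpr (card_ne_zero.mpr ⟨v, hv⟩)
    rcases mem_union.mp hv with hvA | hvB
    · have : (#A : ℝ) ≠ 0 := Nat.cast_ne_zero.mpr (card_ne_zero.mpr ⟨v, hvA⟩)
      rw [if_neg (disjoint_left.mp hAB hvA), if_pos hvA, mul_zero, zero_add]
      field_simp
    · have : (#B : ℝ) ≠ 0 := Nat.cast_ne_zero.mpr (card_ne_zero.mpr ⟨v, hvB⟩)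
      rw [if_pos hvB, if_neg (disjoint_right.mp hAB hvB), mul_zero, add_zero]
      field_simp

lemma cliqueCost_cloneMix_le_max (c : ℕ → ℝ) (hA : A.Nonempty) (hB : B.Nonempty)
    (hAB : Disjoint A B) (hf₁ : IsFracDecomp t (symmetrize G A B) f₁)
    (hf₀ : IsFracDecomp t (symmetrize G B A) f₀) :
    cliqueCost c (cloneMix A B f₁ f₀) ≤ max (cliqueCost c f₁) (cliqueCost c f₀) := by
  have h₀ := cliqueCost_transfer (fun K => hf₀.eq_zero_of_one_lt_card_inter_union) c
    hA subset_union_right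
  rw [union_comm B A] at h₀
  have hcost : cliqueCost c (cloneMix A B f₁ f₀) =
      #B / #(A ∪ B) * cliqueCost c f₁ + #A / #(A ∪ B) * cliqueCost c f₀ := by
    rw [← h₀, ← cliqueCost_transfer (fun K => hf₁.eq_zero_of_one_lt_card_inter_union) c
      hB subset_union_right]
    simp only [cliqueCost, cloneMix, mul_add, sum_add_distrib, mul_sum]
    congr 1 <;> exact sum_congr rfl fun K _ => by ring
  rw [hcost]
  exact convex_Iic (max (cliqueCost c f₁) (cliqueCost c f₀)) (le_max_left _ _)
    (le_max_right (cliqueCost c f₁) _) (by positivity) (by positivity)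
    (div_card_union_add_div_card_union hAB hA)

end CloneMix

lemma le_max_csInf_of_forall_le_max {S T : Set ℝ} (hS : S.Nonempty) (hT : T.Nonempty) {a : ℝ}
    (h : ∀ x ∈ S, ∀ y ∈ T, a ≤ max x y) : a ≤ max (sInf S) (sInf T) := by
  by_contra! hlt
  obtain ⟨x, hx, hxa⟩ := exists_lt_of_csInf_lt hS (le_max_left _ _ |>.trans_lt hlt)
  obtain ⟨y, hy, hya⟩ := exists_lt_of_csInf_lt hT (le_max_right _ _ |>.trans_lt hlt)
  exact (h x hx y hy).not_gt (max_lt hxa hya)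

/-- Lemma 2.1 (decomposition part): symmetrizing one clone class onto the other
does not decrease the fractional `t`-clique decomposition number, for at least
one of the two directions. -/
theorem stmt9 (t : ℕ) (ht : 1 ≤ t) (c : ℕ → ℝ) (hc : ∀ i, 1 ≤ i → 0 ≤ c i)
    (n : ℕ) (G : SimpleGraph (Fin n)) (V₀ V₁ : Set (Fin n))
    (h₀ : IsCloneSet G V₀) (h₁ : IsCloneSet G V₁) (hdisj : Disjoint V₀ V₁)
    (hind : ∀ u ∈ V₀ ∪ V₁, ∀ v ∈ V₀ ∪ V₁, ¬ G.Adj u v) :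
    piFrac t G c ≤
      max (piFrac t (symmetrize G V₀ V₁) c) (piFrac t (symmetrize G V₁ V₀) c) := by
  obtain ⟨A, rfl⟩ := V₀.toFinite.exists_finset_coe
  obtain ⟨B, rfl⟩ := V₁.toFinite.exists_finset_coe
  have hAB : Disjoint A B := disjoint_coe.mp hdisj
  have hind' : G.IsIndepSet (A ∪ B : Finset (Fin n)) := by
    rw [coe_union]
    exact fun u hu v hv _ => hind u hu v hv
  have hnonempty (X : SimpleGraph (Fin n)) :
      {x | ∃ f, IsFracDecomp t X f ∧ x = cliqueCost c f}.Nonempty :=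
    (exists_isFracDecomp ht X).elim fun f hf => ⟨_, f, hf, rfl⟩
  refine le_max_csInf_of_forall_le_max (hnonempty _) (hnonempty _) ?_
  rintro _ ⟨f₁, hf₁, rfl⟩ _ ⟨f₀, hf₀, rfl⟩
  exact (piFrac_le_cliqueCost hc (isFracDecomp_cloneMix h₀ h₁ hAB hind' hf₁ hf₀)).trans
    (cliqueCost_cloneMix_le_max c (coe_nonempty.mp h₀.1) (coe_nonempty.mp h₁.1) hAB hf₁ hf₀)
end

section
/- Let c = (c_i)_{i≥1} be a cost vector of nonnegative reals such that c_{i+1} - c_i ≤ c_t for all i ≥ t, let 2 ≤ t ≤ k, and let x₁ ≥ x₂ ≥ … ≥ x_k ≥ 0 be reals with Σ_i x_i = 1. Then there exists a feasible solution f to the cover LP with parameters x₁, …, x_k such that ‖f‖_c ≤ c_t · (∏_{i=1}^{t-1} x_i) · (1 - Σ_{i=1}^{t-1} x_i). -/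
open scoped Classical
open Finset

/-- `f` is a feasible solution to the cover LP with parameters `x`. -/
def CoverLPFeasible (t : ℕ) {k : ℕ} (x : Fin k → ℝ) (f : Finset (Fin k) → ℝ) : Prop :=
  (∀ I, 0 ≤ f I) ∧
  ∀ T : Finset (Fin k), T.card = t →
    (∏ i ∈ T, x i) ≤ ∑ I ∈ Finset.univ.filter (fun I => T ⊆ I), f I

/-- `f` is a feasible solution to the decomposition LP with parameters `x`. -/
def DecompLPFeasible (t : ℕ) {k : ℕ} (x : Fin k → ℝ) (f : Finset (Fin k) → ℝ) : Prop :=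
  (∀ I, 0 ≤ f I) ∧
  ∀ T : Finset (Fin k), T.card = t →
    ∑ I ∈ Finset.univ.filter (fun I => T ⊆ I), f I = ∏ i ∈ T, x i

/-- The `c`-cost of an LP solution `f`. -/
noncomputable def lpCost (c : ℕ → ℝ) {k : ℕ} (f : Finset (Fin k) → ℝ) : ℝ :=
  ∑ I : Finset (Fin k), c I.card * f I

/-!
With `x_k = 0` and `P = x_0 ⋯ x_{t-2}`, put weight `P·(x_j - x_{j+1})` on each initial segment
`{0, …, j}`, `t - 1 ≤ j < k`. A `t`-set `T` with largest element `m` lies in exactly the segments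
with `j ≥ m`, so by telescoping it is covered with weight `P·x_m`; and `∏_T x ≤ P·x_m`, since the
other `t - 1` elements of `T` carry coordinates no larger than those of `0, …, t - 2`.
The segment `{0, …, j}` costs `c_{j+1}`, and by Abel summation the hypothesis
`c_{i+1} - c_i ≤ c_t` bounds the total cost by `c_t·P·∑_{j ≥ t-1} x_j = c_t·P·(1 - ∑_{j < t-1} x_j)`.
-/

theorem Finset.prod_le_prod_range_card {R : Type*} [CommSemiring R] [PartialOrder R]
    [IsOrderedRing R] {y : ℕ → R} (hy0 : ∀ n, 0 ≤ y n) (hy : Antitone y) (A : Finset ℕ) :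
    ∏ n ∈ A, y n ≤ ∏ n ∈ range #A, y n := by
  induction A using Finset.induction_on_max with
  | empty => simp
  | insert a s hlt ih =>
    have has : a ∉ s := fun h => lt_irrefl a (hlt a h)
    have hcard : #s ≤ a := by
      simpa using card_le_card (fun n hn => mem_range.2 (hlt n hn) : s ⊆ range a)
    rw [prod_insert has, card_insert_of_notMem has, prod_range_succ, mul_comm]
    exact mul_le_mul ih (hy hcard) (hy0 a) (prod_nonneg fun n _ => hy0 n)

theorem Finset.sum_mul_sub_add_mul_le {R : Type*} [CommRing R] [LinearOrder R]
    [IsStrictOrderedRing R] {C : R} {e z : ℕ → R} (hz : ∀ n, 0 ≤ z n) (h0 : e 0 ≤ C)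
    (he : ∀ n, e (n + 1) - e n ≤ C) (n : ℕ) :
    ∑ i ∈ range n, e i * (z i - z (i + 1)) + e n * z n ≤ C * ∑ i ∈ range (n + 1), z i := by
  induction n with
  | zero => simpa using mul_le_mul_of_nonneg_right h0 (hz 0)
  | succ m ih =>
    have := mul_le_mul_of_nonneg_right (he m) (hz (m + 1))
    rw [sum_range_succ, sum_range_succ _ (m + 1), mul_add]
    linarith

def initSeg (k j : ℕ) : Finset (Fin k) := Finset.univ.filter (fun i : Fin k => (i : ℕ) < j)

theorem card_initSeg (k j : ℕ) : #(initSeg k j) = min k j := Fin.card_filter_val_lt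

section CoverLP

variable {k : ℕ}

theorem map_valEmbedding_initSeg {j : ℕ} (hj : j ≤ k) :
    (initSeg k j).map Fin.valEmbedding = range j := by
  ext n
  simp only [initSeg, mem_map, mem_filter, mem_univ, true_and, Fin.valEmbedding_apply, mem_range]
  exact ⟨fun ⟨i, hi, hin⟩ => hin ▸ hi, fun hn => ⟨⟨n, by omega⟩, hn, rfl⟩⟩

theorem subset_initSeg_succ_iff {T : Finset (Fin k)} (hT : T.Nonempty) {j : ℕ} :
    T ⊆ initSeg k (j + 1) ↔ (T.max' hT : ℕ) ≤ j := by
  simp only [subset_iff, initSeg, mem_filter, mem_univ, true_and, Nat.lt_succ_iff]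
  exact ⟨fun h => h (T.max'_mem hT), fun h i hi => (Fin.le_def.1 (T.le_max' i hi)).trans h⟩

noncomputable def extendZero (x : Fin k → ℝ) (n : ℕ) : ℝ := if h : n < k then x ⟨n, h⟩ else 0

noncomputable def chainCover (t : ℕ) (x : Fin k → ℝ) (I : Finset (Fin k)) : ℝ :=
  ∑ j ∈ Ico (t - 1) k with initSeg k (j + 1) = I,
    (∏ i ∈ initSeg k (t - 1), x i) * (extendZero x j - extendZero x (j + 1))

variable {t : ℕ} {x : Fin k → ℝ}

@[simp]
theorem extendZero_val (i : Fin k) : extendZero x i = x i := dif_pos i.isLt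

theorem extendZero_of_le {n : ℕ} (hn : k ≤ n) : extendZero x n = 0 := dif_neg (by omega)

theorem extendZero_nonneg (hx0 : ∀ i, 0 ≤ x i) (n : ℕ) : 0 ≤ extendZero x n := by
  unfold extendZero; split_ifs <;> simp [hx0]

theorem antitone_extendZero (hx0 : ∀ i, 0 ≤ x i) (hx : Antitone x) : Antitone (extendZero x) := by
  intro m n hmn
  by_cases hn : n < k
  · rw [extendZero, extendZero, dif_pos hn, dif_pos (by omega)]
    exact hx (Fin.mk_le_mk.2 hmn)
  · rw [extendZero_of_le (by omega)]
    exact extendZero_nonneg hx0 m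

theorem prod_le_prod_initSeg_card (hx0 : ∀ i, 0 ≤ x i) (hx : Antitone x) (A : Finset (Fin k)) :
    ∏ i ∈ A, x i ≤ ∏ i ∈ initSeg k #A, x i := by
  have hA : #A ≤ k := (card_le_univ A).trans_eq (Fintype.card_fin k)
  calc ∏ i ∈ A, x i = ∏ n ∈ A.map Fin.valEmbedding, extendZero x n := by simp
    _ ≤ ∏ n ∈ range #A, extendZero x n := by
      simpa using prod_le_prod_range_card (extendZero_nonneg hx0) (antitone_extendZero hx0 hx)
        (A.map Fin.valEmbedding)
    _ = ∏ i ∈ initSeg k #A, x i := by rw [← map_valEmbedding_initSeg hA, prod_map]; simp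

theorem sum_Ico_extendZero (a : ℕ) :
    ∑ n ∈ Ico a k, extendZero x n = ∑ i, x i - ∑ i ∈ initSeg k a, x i := by
  have hIco : Ico a k = (univ.filter fun i : Fin k => a ≤ (i : ℕ)).map Fin.valEmbedding := by
    ext n
    simp only [mem_Ico, mem_map, mem_filter, mem_univ, true_and, Fin.valEmbedding_apply]
    exact ⟨fun h => ⟨⟨n, h.2⟩, h.1, rfl⟩, fun ⟨i, hi, hin⟩ => hin ▸ ⟨hi, i.isLt⟩⟩
  rw [hIco, sum_map, eq_sub_iff_add_eq', initSeg, ← sum_filter_add_sum_filter_not univ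
    (fun i : Fin k => (i : ℕ) < a)]
  simp [not_lt]

theorem chainCover_nonneg (hx0 : ∀ i, 0 ≤ x i) (hx : Antitone x) (I : Finset (Fin k)) :
    0 ≤ chainCover t x I :=
  sum_nonneg fun _ _ => mul_nonneg (prod_nonneg fun i _ => hx0 i)
    (sub_nonneg.2 (antitone_extendZero hx0 hx (Nat.le_succ _)))

theorem sum_superset_chainCover {T : Finset (Fin k)} (hT : T.Nonempty) (htT : t ≤ #T) :
    ∑ I ∈ univ with T ⊆ I, chainCover t x I =
      (∏ i ∈ initSeg k (t - 1), x i) * x (T.max' hT) := by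
  set m := T.max' hT
  have hTm : #T ≤ m + 1 :=
    (card_le_card ((subset_initSeg_succ_iff hT).2 le_rfl)).trans ((card_initSeg _ _).trans_le
      (min_le_right _ _))
  have hfilter : {j ∈ Ico (t - 1) k | initSeg k (j + 1) ∈ univ.filter (T ⊆ ·)} = Ico (↑m) k := by
    ext j
    simp only [mem_filter, mem_univ, true_and, mem_Ico, subset_initSeg_succ_iff hT]
    omega
  unfold chainCover
  rw [sum_fiberwise_eq_sum_filter, hfilter, ← mul_sum]
  have htelescope := sum_Ico_sub (fun j => -extendZero x j) m.isLt.le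
  simp only [neg_sub_neg] at htelescope
  rw [htelescope, extendZero_of_le le_rfl, sub_zero, extendZero_val]

theorem coverLPFeasible_chainCover (ht : 1 ≤ t) (hx0 : ∀ i, 0 ≤ x i) (hx : Antitone x) :
    CoverLPFeasible t x (chainCover t x) := by
  refine ⟨chainCover_nonneg hx0 hx, fun T hT => ?_⟩
  have hTne : T.Nonempty := card_pos.1 (by omega)
  rw [sum_superset_chainCover hTne hT.ge, ← prod_erase_mul T x (T.max'_mem hTne)]
  have hprod := prod_le_prod_initSeg_card hx0 hx (T.erase (T.max' hTne))
  rw [card_erase_of_mem (T.max'_mem hTne), hT] at hprod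
  exact mul_le_mul_of_nonneg_right hprod (hx0 _)

theorem lpCost_chainCover (c : ℕ → ℝ) :
    lpCost c (chainCover t x) = ∑ j ∈ Ico (t - 1) k,
      c (j + 1) * ((∏ i ∈ initSeg k (t - 1), x i) * (extendZero x j - extendZero x (j + 1))) := by
  unfold lpCost chainCover
  simp_rw [mul_sum]
  rw [← sum_fiberwise (Ico (t - 1) k) (fun j => initSeg k (j + 1))]
  refine sum_congr rfl fun I _ => sum_congr rfl fun j hj => ?_
  obtain ⟨hjIco, rfl⟩ := mem_filter.1 hj
  rw [card_initSeg, min_eq_right (mem_Ico.1 hjIco).2.nat_succ_le]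

theorem lpCost_chainCover_le (ht : 1 ≤ t) {c : ℕ → ℝ} (hstep : ∀ i, t ≤ i → c (i + 1) - c i ≤ c t)
    (hx0 : ∀ i, 0 ≤ x i) :
    lpCost c (chainCover t x) ≤
      c t * (∏ i ∈ initSeg k (t - 1), x i) * ∑ n ∈ Ico (t - 1) k, extendZero x n := by
  have habel := sum_mul_sub_add_mul_le (C := c t) (e := fun i => c (t - 1 + i + 1))
    (z := fun i => extendZero x (t - 1 + i)) (fun i => extendZero_nonneg hx0 _)
    (by simp [Nat.sub_add_cancel ht]) (fun i => hstep _ (by omega)) (k - (t - 1))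
  have hzero : extendZero x (t - 1 + (k - (t - 1))) = 0 := extendZero_of_le (by omega)
  rw [hzero, mul_zero, add_zero, sum_range_succ, hzero, add_zero] at habel
  rw [lpCost_chainCover, sum_Ico_eq_sum_range, sum_Ico_eq_sum_range]
  have hP : 0 ≤ ∏ i ∈ initSeg k (t - 1), x i := prod_nonneg fun i _ => hx0 i
  calc _ = (∏ i ∈ initSeg k (t - 1), x i) * ∑ i ∈ range (k - (t - 1)),
          c (t - 1 + i + 1) * (extendZero x (t - 1 + i) - extendZero x (t - 1 + i + 1)) := by
        rw [mul_sum]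
        exact sum_congr rfl fun i _ => by ring
    _ ≤ _ := mul_le_mul_of_nonneg_left habel hP
    _ = _ := by ring

end CoverLP

theorem stmt12_general (k t : ℕ) (ht : 2 ≤ t) (c : ℕ → ℝ)
    (hstep : ∀ i, t ≤ i → c (i + 1) - c i ≤ c t)
    (x : Fin k → ℝ) (hx0 : ∀ i, 0 ≤ x i)
    (hmono : ∀ i j : Fin k, i ≤ j → x j ≤ x i)
    (hsum : ∑ i, x i = 1) :
    ∃ f : Finset (Fin k) → ℝ, CoverLPFeasible t x f ∧
      lpCost c f ≤ c t *
        (∏ i ∈ Finset.univ.filter (fun i : Fin k => (i : ℕ) < t - 1), x i) *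
        (1 - ∑ i ∈ Finset.univ.filter (fun i : Fin k => (i : ℕ) < t - 1), x i) := by
  have ht1 : 1 ≤ t := by omega
  refine ⟨chainCover t x, coverLPFeasible_chainCover ht1 hx0 hmono, ?_⟩
  have hcost := lpCost_chainCover_le ht1 hstep hx0
  rwa [sum_Ico_extendZero, hsum] at hcost

/-- Lemma 3.2: if `c_{i+1} - c_i ≤ c_t` for all `i ≥ t` and
`x 0 ≥ x 1 ≥ … ≥ x (k-1) ≥ 0` sum to `1`, then the cover LP has a feasible
solution of cost at most `c_t · (∏_{i<t-1} x i) · (1 - ∑_{i<t-1} x i)`. -/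
theorem stmt12 (k t : ℕ) (ht : 2 ≤ t) (htk : t ≤ k) (c : ℕ → ℝ)
    (hc : ∀ i, 1 ≤ i → 0 ≤ c i) (hstep : ∀ i, t ≤ i → c (i + 1) - c i ≤ c t)
    (x : Fin k → ℝ) (hx0 : ∀ i, 0 ≤ x i)
    (hmono : ∀ i j : Fin k, i ≤ j → x j ≤ x i)
    (hsum : ∑ i, x i = 1) :
    ∃ f : Finset (Fin k) → ℝ, CoverLPFeasible t x f ∧
      lpCost c f ≤ c t *
        (∏ i ∈ Finset.univ.filter (fun i : Fin k => (i : ℕ) < t - 1), x i) *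
        (1 - ∑ i ∈ Finset.univ.filter (fun i : Fin k => (i : ℕ) < t - 1), x i) :=
  stmt12_general k t ht c hstep x hx0 hmono hsum
end

section
/- For every integer t ≥ 2 there exists a constant c > 0 such that for every even integer n ≥ 2t there exists a simple graph G on n vertices with θ_t(G) ≥ c·(log n)·θ*_t(G). In fact, the complete multipartite graph G with n/2 parts each of size 2 satisfies θ*_t(G) = 2^t and θ_t(G) > ⌊log₂(n/t)⌋. -/
/-!
The pair graph is the cocktail party graph on `Fin (n / 2) × Bool`: two vertices are adjacent
iff their first coordinates differ, so cliques are graphs `i ↦ (i, a i)` of partial maps into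
`Bool`. Fractionally, the `2 ^ t` such graphs over `t` fixed parts are `t`-cliques no two of
which lie in a common clique, so every fractional cover costs at least `2 ^ t`; weight
`2 ^ (t - n / 2)` on each of the `2 ^ (n / 2)` maximal cliques covers every `t`-clique exactly
once. Integrally, for a cover `S`, the map sending a part `i` to the members of `S` containing
`(i, true)` is injective into the nonempty subfamilies of `S`: a `t`-clique through `(i, true)`
and `(j, false)` is covered by a member containing `(i, true)` but not `(j, true)`. Hence
`n / 2 < 2 ^ |S|`.
-/

open scoped Classical
open Finset

/-- The complete multipartite graph on `Fin n` (for even `n`) whose parts are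
the `n/2` consecutive pairs `{2k, 2k+1}`. -/
def pairGraph (n : ℕ) : SimpleGraph (Fin n) where
  Adj u v := (u : ℕ) / 2 ≠ (v : ℕ) / 2
  symm := ⟨fun _ _ h => Ne.symm h⟩
  loopless := ⟨fun _ h => h rfl⟩

lemma SimpleGraph.IsClique.finsetCongr {V W : Type} {G : SimpleGraph V} {H : SimpleGraph W}
    (e : G ≃g H) {K : Finset V} (hK : G.IsClique (K : Set V)) :
    H.IsClique (e.toEquiv.finsetCongr K : Set W) := by
  rw [Equiv.finsetCongr_apply, Finset.coe_map]
  rintro _ ⟨u, hu, rfl⟩ _ ⟨v, hv, rfl⟩ huv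
  exact e.map_adj_iff.mpr (hK hu hv fun h => huv (h ▸ rfl))

section Iso

variable {V W : Type} [Fintype V] [DecidableEq V] [Fintype W] [DecidableEq W]
  {G : SimpleGraph V} {H : SimpleGraph W} {t : ℕ}

lemma cliqueCost_comp_finsetCongr (e : W ≃ V) (c : ℕ → ℝ) (f : Finset V → ℝ) :
    cliqueCost c (f ∘ e.finsetCongr) = cliqueCost c f :=
  Fintype.sum_equiv e.finsetCongr _ _ fun K => by simp

lemma IsFracCover.comp_finsetCongr (e : G ≃g H) {f : Finset V → ℝ}
    (hf : IsFracCover t G f) : IsFracCover t H (f ∘ e.symm.toEquiv.finsetCongr) := by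
  obtain ⟨hpos, hzero, hcov⟩ := hf
  have hback (K : Finset W) : e.toEquiv.finsetCongr (e.symm.toEquiv.finsetCongr K) = K :=
    e.toEquiv.finsetCongr.apply_symm_apply K
  refine ⟨fun K => hpos _, fun K hK => hzero _ fun hKc => hK ?_, fun T hT hTc => ?_⟩
  · exact ⟨by simpa using hKc.1, by simpa only [hback] using hKc.2.finsetCongr e⟩
  · have h := hcov _ (by simpa using hT) (hTc.finsetCongr e.symm)
    rw [Finset.sum_filter] at h ⊢
    refine h.trans_eq (Fintype.sum_equiv e.symm.toEquiv.finsetCongr _ _ fun K => ?_).symm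
    simp only [Function.comp_apply, Equiv.finsetCongr_apply, Finset.map_subset_map]

lemma exists_isFracCover_congr (e : G ≃g H) {c : ℕ → ℝ} {x : ℝ}
    (h : ∃ f, IsFracCover t G f ∧ x = cliqueCost c f) :
    ∃ f, IsFracCover t H f ∧ x = cliqueCost c f := by
  obtain ⟨f, hf, rfl⟩ := h
  exact ⟨_, hf.comp_finsetCongr e, (cliqueCost_comp_finsetCongr e.symm.toEquiv c f).symm⟩

lemma exists_isIntCover_congr (e : G ≃g H) {c : ℕ → ℝ} {x : ℝ}
    (h : ∃ f, IsIntCover t G f ∧ x = cliqueCost c f) :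
    ∃ f, IsIntCover t H f ∧ x = cliqueCost c f := by
  obtain ⟨f, hf, rfl⟩ := h
  exact ⟨_, ⟨hf.1.comp_finsetCongr e, fun K => hf.2 _⟩,
    (cliqueCost_comp_finsetCongr e.symm.toEquiv c f).symm⟩

end Iso

lemma thetaFrac_congr {V W : Type} [Fintype V] [DecidableEq V] [Fintype W] [DecidableEq W]
    {G : SimpleGraph V} {H : SimpleGraph W} (e : G ≃g H) (t : ℕ) (c : ℕ → ℝ) :
    thetaFrac t G c = thetaFrac t H c := by
  unfold thetaFrac
  congr 1
  ext x
  exact ⟨exists_isFracCover_congr e, exists_isFracCover_congr e.symm⟩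

lemma thetaInt_congr {V W : Type} [Fintype V] [DecidableEq V] [Fintype W] [DecidableEq W]
    {G : SimpleGraph V} {H : SimpleGraph W} (e : G ≃g H) (t : ℕ) (c : ℕ → ℝ) :
    thetaInt t G c = thetaInt t H c := by
  unfold thetaInt
  congr 1
  ext x
  exact ⟨exists_isIntCover_congr e, exists_isIntCover_congr e.symm⟩

section Covers

variable {V : Type} [Fintype V] [DecidableEq V] {G : SimpleGraph V} {t : ℕ}
  {f : Finset V → ℝ}

lemma cliqueCost_one (f : Finset V → ℝ) : cliqueCost (fun _ => 1) f = ∑ K, f K := by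
  simp only [cliqueCost, one_mul]

lemma card_le_cliqueCost_of_isFracCover {α : Type} [Fintype α] (hf : IsFracCover t G f)
    (T : α → Finset V) (hT : ∀ a, #(T a) = t ∧ G.IsClique (T a : Set V))
    (hsep : ∀ K : Finset V, G.IsClique (K : Set V) → ∀ a b, T a ⊆ K → T b ⊆ K → a = b) :
    (Fintype.card α : ℝ) ≤ cliqueCost (fun _ => 1) f := by
  obtain ⟨hpos, hzero, hcov⟩ := hf
  have hle (K : Finset V) : ∑ a with T a ⊆ K, f K ≤ f K := by
    by_cases hK : G.IsClique (K : Set V)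
    · rw [Finset.sum_const, nsmul_eq_mul]
      refine mul_le_of_le_one_left (hpos K) ?_
      exact_mod_cast Finset.card_le_one.mpr fun a ha b hb =>
        hsep K hK a b (Finset.mem_filter.mp ha).2 (Finset.mem_filter.mp hb).2
    · simp [hzero K fun h => hK h.2]
  calc (Fintype.card α : ℝ) = ∑ _a : α, 1 := by simp
    _ ≤ ∑ a, ∑ K with T a ⊆ K, f K := Finset.sum_le_sum fun a _ => hcov _ (hT a).1 (hT a).2
    _ = ∑ K, ∑ a with T a ⊆ K, f K := Finset.sum_comm' (by simp)
    _ ≤ ∑ K, f K := Finset.sum_le_sum fun K _ => hle K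
    _ = cliqueCost (fun _ => 1) f := (cliqueCost_one f).symm

lemma isFracCover_ite_mem {𝓜 : Finset (Finset V)} {w : ℝ} (hw : 0 ≤ w)
    (h𝓜 : ∀ K ∈ 𝓜, IsCliqueOf G K)
    (hcov : ∀ T : Finset V, #T = t → G.IsClique (T : Set V) → 1 ≤ #{K ∈ 𝓜 | T ⊆ K} * w) :
    IsFracCover t G (fun K => if K ∈ 𝓜 then w else 0) := by
  refine ⟨fun K => ite_nonneg hw le_rfl, fun K hK => if_neg fun h => hK (h𝓜 K h),
    fun T hT hTc => (hcov T hT hTc).trans_eq ?_⟩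
  rw [Finset.sum_ite_mem, Finset.sum_const, nsmul_eq_mul]
  congr 3
  ext K
  simp [and_comm]

lemma cliqueCost_ite_mem (𝓜 : Finset (Finset V)) (w : ℝ) :
    cliqueCost (fun _ => 1) (fun K => if K ∈ 𝓜 then w else 0) = #𝓜 * w := by
  rw [cliqueCost_one, Finset.sum_ite_mem, Finset.univ_inter, Finset.sum_const, nsmul_eq_mul]

lemma IsIntCover.exists_finset (hf : IsIntCover t G f) :
    ∃ S : Finset (Finset V), (∀ K ∈ S, G.IsClique (K : Set V)) ∧
      (∀ T : Finset V, #T = t → G.IsClique (T : Set V) → ∃ K ∈ S, T ⊆ K) ∧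
      cliqueCost (fun _ => 1) f = #S := by
  obtain ⟨⟨-, hzero, hcov⟩, hbool⟩ := hf
  refine ⟨({K | f K = 1} : Finset _), fun K hK => ?_, fun T hT hTc => ?_, ?_⟩
  · by_contra h
    have := hzero K fun hc => h hc.2
    simp_all
  · by_contra! h
    have := hcov T hT hTc
    rw [Finset.sum_eq_zero fun K hK => (hbool K).resolve_right
      fun h1 => h K (by simpa using h1) (Finset.mem_filter.mp hK).2] at this
    norm_num at this
  · rw [cliqueCost_one, ← Finset.sum_boole]
    exact Finset.sum_congr rfl fun K _ => by rcases hbool K with h | h <;> simp [h]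

lemma isIntCover_ite_isCliqueOf (ht : 0 < t) :
    IsIntCover t G (fun K => if IsCliqueOf G K then 1 else 0) := by
  refine ⟨⟨fun K => ite_nonneg zero_le_one le_rfl, fun K hK => if_neg hK, fun T hT hTc => ?_⟩,
    fun K => by by_cases h : IsCliqueOf G K <;> simp [h]⟩
  have hTK : IsCliqueOf G T := ⟨Finset.card_pos.mp (hT ▸ ht), hTc⟩
  calc (1 : ℝ) = if IsCliqueOf G T then 1 else 0 := (if_pos hTK).symm
    _ ≤ ∑ K with T ⊆ K, if IsCliqueOf G K then (1 : ℝ) else 0 :=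
      Finset.single_le_sum (fun K _ => ite_nonneg zero_le_one le_rfl) (by simp)

end Covers

def cocktailParty (ι : Type) : SimpleGraph (ι × Bool) :=
  (⊤ : SimpleGraph ι).comap Prod.fst

section CocktailParty

variable {ι κ : Type}

@[simp]
lemma cocktailParty_adj {x y : ι × Bool} : (cocktailParty ι).Adj x y ↔ x.1 ≠ y.1 := by
  simp [cocktailParty]

lemma isClique_cocktailParty_iff {s : Set (ι × Bool)} :
    (cocktailParty ι).IsClique s ↔ s.InjOn Prod.fst :=
  ⟨fun h _ hx _ hy hxy => by_contra fun hne => cocktailParty_adj.mp (h hx hy hne) hxy,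
    fun h _ hx _ hy hne => cocktailParty_adj.mpr fun hxy => hne (h hx hy hxy)⟩

lemma eq_of_isClique_cocktailParty {s : Set (ι × Bool)} (hs : (cocktailParty ι).IsClique s)
    {i : ι} {b b' : Bool} (hb : (i, b) ∈ s) (hb' : (i, b') ∈ s) : b = b' :=
  congrArg Prod.snd (isClique_cocktailParty_iff.mp hs hb hb' rfl)

variable [Fintype κ]

def transversal (e : κ ↪ ι) (a : κ → Bool) : Finset (ι × Bool) :=
  Finset.univ.map ⟨fun j => (e j, a j), fun _ _ h => e.injective (congrArg Prod.fst h)⟩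

lemma mem_transversal {e : κ ↪ ι} {a : κ → Bool} {x : ι × Bool} :
    x ∈ transversal e a ↔ ∃ j, (e j, a j) = x := by
  simp only [transversal, Finset.mem_map, Finset.mem_univ, true_and]
  rfl

lemma card_transversal (e : κ ↪ ι) (a : κ → Bool) : #(transversal e a) = Fintype.card κ := by
  simp [transversal]

lemma isClique_transversal (e : κ ↪ ι) (a : κ → Bool) :
    (cocktailParty ι).IsClique (transversal e a : Set (ι × Bool)) := by
  rw [isClique_cocktailParty_iff]
  rintro _ hx _ hy hxy
  obtain ⟨j, rfl⟩ := mem_transversal.mp hx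
  obtain ⟨j', rfl⟩ := mem_transversal.mp hy
  obtain rfl : j = j' := e.injective hxy
  rfl

lemma eq_of_transversal_subset {e : κ ↪ ι} {a b : κ → Bool} {K : Finset (ι × Bool)}
    (hK : (cocktailParty ι).IsClique (K : Set (ι × Bool)))
    (ha : transversal e a ⊆ K) (hb : transversal e b ⊆ K) : a = b :=
  funext fun j => eq_of_isClique_cocktailParty hK
    (ha (mem_transversal.mpr ⟨j, rfl⟩)) (hb (mem_transversal.mpr ⟨j, rfl⟩))

lemma transversal_injective (e : κ ↪ ι) : Function.Injective (transversal e) :=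
  fun _ _ h => eq_of_transversal_subset (isClique_transversal e _) le_rfl h.ge

end CocktailParty

section CocktailPartyCovers

variable {ι : Type} [Fintype ι] [DecidableEq ι] {t : ℕ}

lemma two_pow_le_cliqueCost_of_isFracCover_cocktailParty {f : Finset (ι × Bool) → ℝ}
    (ht : t ≤ Fintype.card ι) (hf : IsFracCover t (cocktailParty ι) f) :
    2 ^ t ≤ cliqueCost (fun _ => 1) f := by
  obtain ⟨e⟩ : Nonempty (Fin t ↪ ι) :=
    Function.Embedding.nonempty_of_card_le (by simpa using ht)
  simpa using card_le_cliqueCost_of_isFracCover hf (transversal e)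
    (fun a => ⟨by simp [card_transversal], isClique_transversal e a⟩)
    (fun _ hK _ _ ha hb => eq_of_transversal_subset hK ha hb)

def overrideBy (T : Finset (ι × Bool)) (a : ι → Bool) (i : ι) : Bool :=
  if (i, !a i) ∈ T then !a i else a i

lemma subset_transversal_overrideBy {T : Finset (ι × Bool)}
    (hT : (cocktailParty ι).IsClique (T : Set (ι × Bool))) (a : ι → Bool) :
    T ⊆ transversal (Function.Embedding.refl ι) (overrideBy T a) := by
  rintro ⟨i, b⟩ hib
  refine mem_transversal.mpr ⟨i, ?_⟩
  simp only [Function.Embedding.refl_apply, Prod.mk.injEq, true_and, overrideBy]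
  split_ifs with h
  · exact eq_of_isClique_cocktailParty hT h hib
  · cases b <;> cases hai : a i <;> simp_all

lemma two_pow_card_le_mul_card_transversal_superset {T : Finset (ι × Bool)}
    (hT : (cocktailParty ι).IsClique (T : Set (ι × Bool))) :
    2 ^ Fintype.card ι ≤
      2 ^ #T * #{a : ι → Bool | T ⊆ transversal (Function.Embedding.refl ι) a} := by
  have hinj : Function.Injective fun a : ι → Bool =>
      ((⟨overrideBy T a, subset_transversal_overrideBy hT a⟩ :
        {a // T ⊆ transversal (Function.Embedding.refl ι) a}), fun x : T => a x.1.1) := by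
    intro a a' h
    simp only [Prod.mk.injEq, Subtype.mk.injEq] at h
    funext i
    by_cases hi : ∃ x ∈ T, x.1 = i
    · obtain ⟨x, hx, rfl⟩ := hi
      exact congrFun h.2 ⟨x, hx⟩
    · have hfix (a : ι → Bool) : overrideBy T a i = a i :=
        if_neg fun h => hi ⟨_, h, rfl⟩
      rw [← hfix a, ← hfix a', h.1]
  simpa [Fintype.card_prod, Fintype.card_subtype, mul_comm] using
    Fintype.card_le_of_injective _ hinj

lemma exists_isFracCover_cocktailParty [Nonempty ι] :
    ∃ f, IsFracCover t (cocktailParty ι) f ∧ cliqueCost (fun _ => 1) f = 2 ^ t := by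
  set 𝓜 : Finset (Finset (ι × Bool)) :=
    Finset.univ.map ⟨_, transversal_injective (Function.Embedding.refl ι)⟩
  have h𝓜 : (#𝓜 : ℝ) = 2 ^ Fintype.card ι := by simp [𝓜]
  refine ⟨_, isFracCover_ite_mem (𝓜 := 𝓜) (w := 2 ^ t / 2 ^ Fintype.card ι) (by positivity)
    (fun K hK => ?_) (fun T hT hTc => ?_), ?_⟩
  · obtain ⟨a, -, rfl⟩ := Finset.mem_map.mp hK
    refine ⟨Finset.card_pos.mp ?_, isClique_transversal _ a⟩
    simpa [card_transversal] using Fintype.card_pos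
  · have hcount : #{K ∈ 𝓜 | T ⊆ K} =
        #{a : ι → Bool | T ⊆ transversal (Function.Embedding.refl ι) a} := by
      simp [𝓜, Finset.filter_map]
    rw [hcount, mul_div_assoc', le_div_iff₀ (by positivity), one_mul, mul_comm, ← hT]
    exact_mod_cast two_pow_card_le_mul_card_transversal_superset hTc
  · rw [cliqueCost_ite_mem, h𝓜]
    field_simp

lemma thetaFrac_cocktailParty [Nonempty ι] (ht : t ≤ Fintype.card ι) :
    thetaFrac t (cocktailParty ι) (fun _ => 1) = 2 ^ t := by
  obtain ⟨f, hf, hcost⟩ := exists_isFracCover_cocktailParty (ι := ι) (t := t)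
  refine IsLeast.csInf_eq ⟨⟨f, hf, hcost.symm⟩, ?_⟩
  rintro _ ⟨g, hg, rfl⟩
  exact two_pow_le_cliqueCost_of_isFracCover_cocktailParty ht hg

end CocktailPartyCovers

section CocktailPartyIntCovers

variable {ι : Type} [Fintype ι] {t : ℕ} {S : Finset (Finset (ι × Bool))}

lemma exists_mem_superset_of_subset_transversal
    (hcov : ∀ T : Finset (ι × Bool), #T = t →
      (cocktailParty ι).IsClique (T : Set (ι × Bool)) → ∃ K ∈ S, T ⊆ K)
    (ht : t ≤ Fintype.card ι) {C : Finset (ι × Bool)} {a : ι → Bool}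
    (hC : C ⊆ transversal (Function.Embedding.refl ι) a) (hCt : #C ≤ t) :
    ∃ K ∈ S, C ⊆ K := by
  obtain ⟨T, hCT, hTa, hT⟩ :=
    Finset.exists_subsuperset_card_eq hC hCt (by rwa [card_transversal])
  obtain ⟨K, hK, hTK⟩ := hcov T hT ((isClique_transversal _ a).subset (by exact_mod_cast hTa))
  exact ⟨K, hK, hCT.trans hTK⟩

lemma card_lt_two_pow_card_of_covers_cocktailParty [DecidableEq ι] (ht : 2 ≤ t)
    (htι : t ≤ Fintype.card ι) (hS : ∀ K ∈ S, (cocktailParty ι).IsClique (K : Set (ι × Bool)))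
    (hcov : ∀ T : Finset (ι × Bool), #T = t →
      (cocktailParty ι).IsClique (T : Set (ι × Bool)) → ∃ K ∈ S, T ⊆ K) :
    Fintype.card ι < 2 ^ #S := by
  have hmem (a : ι → Bool) (i : ι) : (i, a i) ∈ transversal (Function.Embedding.refl ι) a :=
    mem_transversal.mpr ⟨i, rfl⟩
  let parts (i : ι) : Finset (Finset (ι × Bool)) := {K ∈ S | (i, true) ∈ K}
  have hmaps (i : ι) : parts i ∈ S.powerset.erase ∅ := by
    obtain ⟨K, hK, hiK⟩ := exists_mem_superset_of_subset_transversal hcov htι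
      (Finset.singleton_subset_iff.mpr (hmem (fun _ => true) i)) (by simp; omega)
    refine Finset.mem_erase.mpr ⟨Finset.nonempty_iff_ne_empty.mp ⟨K, ?_⟩,
      Finset.mem_powerset.mpr (Finset.filter_subset _ _)⟩
    simpa [parts, hK] using hiK
  have hinj : Function.Injective parts := by
    intro i j hij
    by_contra hne
    have hsub : {(i, true), (j, false)} ⊆
        transversal (Function.Embedding.refl ι) fun k => decide (k = i) := by
      rw [Finset.insert_subset_iff, Finset.singleton_subset_iff]
      exact ⟨by simpa using hmem (fun k => decide (k = i)) i,
        by simpa [Ne.symm hne] using hmem (fun k => decide (k = i)) j⟩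
    obtain ⟨K, hK, hijK⟩ := exists_mem_superset_of_subset_transversal hcov htι hsub
      (Finset.card_le_two.trans ht)
    obtain ⟨hiK, hjK⟩ := Finset.insert_subset_iff.mp hijK
    have hK' : K ∈ parts j := hij ▸ Finset.mem_filter.mpr ⟨hK, hiK⟩
    exact Bool.noConfusion (eq_of_isClique_cocktailParty (hS K hK)
      (Finset.mem_filter.mp hK').2 (Finset.singleton_subset_iff.mp hjK))
  calc Fintype.card ι = #(Finset.univ : Finset ι) := Finset.card_univ.symm
    _ ≤ #(S.powerset.erase ∅) :=
      Finset.card_le_card_of_injOn parts (fun i _ => hmaps i) hinj.injOn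
    _ < 2 ^ #S := by
      rw [Finset.card_erase_of_mem (Finset.empty_mem_powerset S), Finset.card_powerset]
      exact Nat.sub_lt (by positivity) one_pos

lemma natLog_add_one_le_thetaInt_cocktailParty [DecidableEq ι] (ht : 2 ≤ t)
    (htι : t ≤ Fintype.card ι) :
    (Nat.log 2 (Fintype.card ι) + 1 : ℝ) ≤ thetaInt t (cocktailParty ι) (fun _ => 1) := by
  refine le_csInf ⟨_, _, isIntCover_ite_isCliqueOf (by omega), rfl⟩ ?_
  rintro _ ⟨f, hf, rfl⟩
  obtain ⟨S, hS, hcov, hcost⟩ := hf.exists_finset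
  have := Nat.log_lt_of_lt_pow (by omega)
    (card_lt_two_pow_card_of_covers_cocktailParty ht htι hS hcov)
  rw [hcost]
  exact_mod_cast this

end CocktailPartyIntCovers

def pairGraphIso (N : ℕ) : pairGraph (N + N) ≃g cocktailParty (Fin N) where
  toFun v := (⟨v / 2, by omega⟩, decide ((v : ℕ) % 2 = 1))
  invFun x := ⟨2 * x.1 + x.2.toNat, by have := x.2.toNat_le; omega⟩
  left_inv v := by
    ext
    rcases Nat.mod_two_eq_zero_or_one v with h | h <;> simp [h] <;> omega
  right_inv x := by
    rcases x with ⟨i, b⟩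
    cases b <;> ext <;> simp
    omega
  map_rel_iff' := by simp [pairGraph, Fin.ext_iff]

lemma Real.log_natCast_le_natLog_add_one_mul (n : ℕ) :
    Real.log n ≤ (Nat.log 2 n + 1) * Real.log 2 := by
  rcases n.eq_zero_or_pos with rfl | hn
  · simp [Real.log_nonneg one_le_two]
  calc Real.log n ≤ Real.log (2 ^ (Nat.log 2 n + 1) : ℕ) :=
        Real.log_le_log (by exact_mod_cast hn)
          (by exact_mod_cast (Nat.lt_pow_succ_log_self one_lt_two n).le)
    _ = (Nat.log 2 n + 1) * Real.log 2 := by rw [Nat.cast_pow, Real.log_pow]; push_cast; rfl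

/-- Proposition 5.2: the multiplicative integrality gap for `t`-clique covers is
`Ω(log n)`: the complete multipartite graph with `n/2` parts of size `2`
satisfies `θ*_t = 2ᵗ` and `θ_t > ⌊log₂(n/t)⌋`. -/
theorem stmt18 (t : ℕ) (ht : 2 ≤ t) :
    ∃ C : ℝ, 0 < C ∧ ∀ n : ℕ, Even n → 2 * t ≤ n →
      C * Real.log n * thetaFrac t (pairGraph n) (fun _ => 1) ≤
        thetaInt t (pairGraph n) (fun _ => 1) ∧
      thetaFrac t (pairGraph n) (fun _ => 1) = 2 ^ t ∧
      (Nat.log 2 (n / t) : ℝ) < thetaInt t (pairGraph n) (fun _ => 1) := by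
  refine ⟨(2 ^ (t + 1) * Real.log 2)⁻¹, by positivity, fun n hn htn => ?_⟩
  obtain ⟨N, rfl⟩ := hn
  have htN : t ≤ Fintype.card (Fin N) := by rw [Fintype.card_fin]; omega
  have : Nonempty (Fin N) := ⟨⟨0, by omega⟩⟩
  have hfrac : thetaFrac t (pairGraph (N + N)) (fun _ => 1) = 2 ^ t :=
    (thetaFrac_congr (pairGraphIso N) t _).trans (thetaFrac_cocktailParty htN)
  have hint : (Nat.log 2 N + 1 : ℝ) ≤ thetaInt t (pairGraph (N + N)) (fun _ => 1) := by
    rw [thetaInt_congr (pairGraphIso N)]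
    simpa using natLog_add_one_le_thetaInt_cocktailParty ht htN
  refine ⟨?_, hfrac, ?_⟩
  · have hlog2 := Real.log_pos one_lt_two
    have hlog : Real.log (N + N : ℕ) ≤ 2 * Real.log 2 * (Nat.log 2 N + 1) := by
      have hN : (N : ℝ) ≠ 0 := by exact_mod_cast (by omega : N ≠ 0)
      rw [Nat.cast_add, ← two_mul, Real.log_mul two_ne_zero hN]
      nlinarith [Real.log_natCast_le_natLog_add_one_mul N]
    rw [hfrac]
    calc (2 ^ (t + 1) * Real.log 2)⁻¹ * Real.log (N + N : ℕ) * 2 ^ t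
        = Real.log (N + N : ℕ) / (2 * Real.log 2) := by field_simp; ring
      _ ≤ Nat.log 2 N + 1 := by rw [div_le_iff₀ (by positivity)]; linarith
      _ ≤ thetaInt t (pairGraph (N + N)) (fun _ => 1) := hint
  · have hle : Nat.log 2 ((N + N) / t) ≤ Nat.log 2 N :=
      Nat.log_mono_right (Nat.div_le_of_le_mul (by nlinarith))
    calc (Nat.log 2 ((N + N) / t) : ℝ) ≤ Nat.log 2 N := by exact_mod_cast hle
      _ < thetaInt t (pairGraph (N + N)) (fun _ => 1) := by linarith
end
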